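/- For M = 2, combining the two bilinear Backlund relations t_1 τ_{k,l} T_1(τ) + τ_k T_1(τ_l) − τ_l T_1(τ_k) = 0 and t_2 τ_{k,l} T_2(τ) + τ_k T_2(τ_l) − τ_l T_2(τ_k) = 0 with the similarity condition T_1T_2(S_μ) = q^{|μ|} S_μ yields the Toda-type bilinear equation q^k t_1 T_1(τ) τ_{k,l} + t_2 T_1(τ_{k,l}) τ = (q^k − q^l) T_1(τ_k) τ_l, where τ = S_λ, τ_k = S_{(k,λ)}, τ_l = S_{(l,λ)}, τ_{k,l} = S_{(l−1,k,λ)}. -/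

import Mathlib

open scoped BigOperators

noncomputable section

/-- `(q;q)_n = ∏_{j=1}^n (1 - q^j)` -/
def qPoch (q : ℂ) (n : ℕ) : ℂ := ∏ j ∈ Finset.range n, (1 - q ^ (j + 1))

/-- The q-analogue `h_k(t)` of the complete homogeneous symmetric functions,
with `h_k = 0` for `k < 0`. -/
def hco (M : ℕ) (q : ℂ) (k : ℤ) (t : Fin M → ℂ) : ℂ :=
  if 0 ≤ k then
    ∑ ν ∈ Finset.Nat.antidiagonalTuple M k.toNat, ∏ i, t i ^ ν i / qPoch q (ν i)
  else 0

/-- The q-shift operator `T_i`, replacing `t_i` by `q t_i`. -/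
def qshift (M : ℕ) (q : ℂ) (i : Fin M) (t : Fin M → ℂ) : Fin M → ℂ :=
  Function.update t i (q * t i)

/-- The (generalized) q-Schur function `S_μ(t) = det[h_{μ_a-a+b}(t)]` for an
integer sequence `μ`. -/
def Sgen (M : ℕ) (q : ℂ) {l : ℕ} (μ : Fin l → ℤ) (t : Fin M → ℂ) : ℂ :=
  Matrix.det (Matrix.of fun a b : Fin l => hco M q (μ a - (a : ℤ) + (b : ℤ)) t)


lemma det_rows_not_linIndep {n : ℕ} (v : Fin n → (Fin n → ℂ))
    (h : ¬ LinearIndependent ℂ v) : (Matrix.of v).det = 0 :=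
  Matrix.detRowAlternating.map_linearDependent v h

section Pluecker

variable {m : ℕ} (Z : Fin m → (Fin (m + 2) → ℂ))

/-- determinant with two distinguished first rows -/
def Dtwo (x y : Fin (m + 2) → ℂ) : ℂ :=
  Matrix.detRowAlternating (R := ℂ) (Fin.cons x (Fin.cons y Z))

lemma Dtwo_add_left (x x' y : Fin (m + 2) → ℂ) :
    Dtwo Z (x + x') y = Dtwo Z x y + Dtwo Z x' y := by
  have h := Matrix.detRowAlternating.map_update_add
    (Fin.cons x (Fin.cons y Z)) (0 : Fin (m + 2)) x x'
  simp [Fin.update_cons_zero] at h; exact h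

lemma Dtwo_smul_left (r : ℂ) (x y : Fin (m + 2) → ℂ) :
    Dtwo Z (r • x) y = r * Dtwo Z x y := by
  have h := Matrix.detRowAlternating.map_update_smul
    (Fin.cons x (Fin.cons y Z)) (0 : Fin (m + 2)) r x
  simp [Fin.update_cons_zero] at h; exact h

lemma cons_snd_eq_update (x y y0 : Fin (m + 2) → ℂ) :
    Fin.cons x (Fin.cons y0 Z) =
      Function.update (Fin.cons x (Fin.cons y Z) : Fin (m + 2) → (Fin (m + 2) → ℂ))
        ((0 : Fin (m + 1)).succ) y0 := by
  rw [← Fin.cons_update, Fin.update_cons_zero]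

lemma Dtwo_add_right (x y y' : Fin (m + 2) → ℂ) :
    Dtwo Z x (y + y') = Dtwo Z x y + Dtwo Z x y' := by
  unfold Dtwo
  rw [cons_snd_eq_update Z x y (y + y'), Matrix.detRowAlternating.map_update_add,
    ← cons_snd_eq_update Z x y y, ← cons_snd_eq_update Z x y y']

lemma Dtwo_smul_right (r : ℂ) (x y : Fin (m + 2) → ℂ) :
    Dtwo Z x (r • y) = r * Dtwo Z x y := by
  unfold Dtwo
  rw [cons_snd_eq_update Z x y (r • y), Matrix.detRowAlternating.map_update_smul,
    ← cons_snd_eq_update Z x y y]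
  rfl

lemma Dtwo_same (x : Fin (m + 2) → ℂ) : Dtwo Z x x = 0 := by
  refine Matrix.detRowAlternating.map_eq_zero_of_eq _
    (i := (0 : Fin (m+2))) (j := (0 : Fin (m+1)).succ) (by simp) (by simp [Fin.ext_iff])

lemma Dtwo_swap (x y : Fin (m + 2) → ℂ) : Dtwo Z y x = - Dtwo Z x y := by
  have h0 : Dtwo Z (x + y) (x + y) = 0 := Dtwo_same Z _
  rw [Dtwo_add_left, Dtwo_add_right, Dtwo_add_right, Dtwo_same, Dtwo_same] at h0
  linear_combination h0
  
end Pluecker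

section Pluecker2

variable {m : ℕ} (Z : Fin m → (Fin (m + 2) → ℂ))

lemma Dtwo_zero_left (y : Fin (m + 2) → ℂ) : Dtwo Z 0 y = 0 := by
  have h := Dtwo_smul_left Z 0 0 y
  simpa using h

lemma Dtwo_left_mem (i : Fin m) (y : Fin (m + 2) → ℂ) : Dtwo Z (Z i) y = 0 :=
  Matrix.detRowAlternating.map_eq_zero_of_eq _
    (i := (0 : Fin (m + 2))) (j := i.succ.succ) (by simp)
    (Ne.symm (Fin.succ_ne_zero _))

lemma Dtwo_right_mem (i : Fin m) (x : Fin (m + 2) → ℂ) : Dtwo Z x (Z i) = 0 :=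
  Matrix.detRowAlternating.map_eq_zero_of_eq _
    (i := ((0 : Fin (m + 1)).succ)) (j := i.succ.succ) (by simp)
    (fun h => Fin.succ_ne_zero _ (Fin.succ_injective _ h).symm)

lemma det_zero_of_rows_le {n : ℕ} {p : Submodule ℂ (Fin n → ℂ)} (hp : p ≠ ⊤)
    (v : Fin n → (Fin n → ℂ)) (hv : ∀ i, v i ∈ p) :
    Matrix.detRowAlternating (R := ℂ) v = 0 := by
  refine AlternatingMap.map_linearDependent _ v ?_
  intro hli
  have htop : Submodule.span ℂ (Set.range v) = ⊤ :=
    hli.span_eq_top_of_card_eq_finrank' (by simp [Module.finrank_fin_fun])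
  exact hp (top_unique (htop ▸ Submodule.span_le.mpr (Set.range_subset_iff.2 hv)))

theorem pluecker (a b c d : Fin (m + 2) → ℂ) :
    Dtwo Z a b * Dtwo Z c d - Dtwo Z a c * Dtwo Z b d + Dtwo Z a d * Dtwo Z b c = 0 := by
  classical
  set w : Fin (m + 3) → (Fin (m + 2) → ℂ) := Fin.cons a (Fin.cons b (Fin.cons d Z)) with hw
  set F : (Fin (m + 2) → ℂ) → ℂ := fun x =>
    Dtwo Z a b * Dtwo Z x d - Dtwo Z a x * Dtwo Z b d + Dtwo Z a d * Dtwo Z b x with hF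
  by_cases hsp : Submodule.span ℂ (Set.range w) = ⊤
  · have hc : c ∈ Submodule.span ℂ (Set.range w) := hsp ▸ Submodule.mem_top
    have : F c = 0 := by
      induction hc using Submodule.span_induction with
      | mem x hx =>
        obtain ⟨i, rfl⟩ := hx
        induction i using Fin.cases with
        | zero =>
          simp only [hw, hF, Fin.cons_zero]
          have h1 := Dtwo_same Z a
          have h2 := Dtwo_swap Z a b
          linear_combination Dtwo Z a d * h2 - Dtwo Z b d * h1
        | succ j =>
          induction j using Fin.cases with
          | zero =>
            simp only [hw, hF, Fin.cons_succ, Fin.cons_zero]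
            have h1 := Dtwo_same Z b
            linear_combination Dtwo Z a d * h1
          | succ u =>
            induction u using Fin.cases with
            | zero =>
              simp only [hw, hF, Fin.cons_succ, Fin.cons_zero]
              have h1 := Dtwo_same Z d
              linear_combination Dtwo Z a b * h1
            | succ i =>
              simp only [hw, hF, Fin.cons_succ]
              rw [Dtwo_left_mem, Dtwo_right_mem, Dtwo_right_mem]
              ring
      | zero =>
        simp only [hF]
        rw [Dtwo_zero_left]
        have h1 : Dtwo Z a (0 : Fin (m+2) → ℂ) = 0 := by
          have := Dtwo_smul_right Z 0 a 0; simpa using this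
        have h2 : Dtwo Z b (0 : Fin (m+2) → ℂ) = 0 := by
          have := Dtwo_smul_right Z 0 b 0; simpa using this
        rw [h1, h2]; ring
      | add x y hx hy ihx ihy =>
        simp only [hF] at ihx ihy ⊢
        rw [Dtwo_add_left, Dtwo_add_right, Dtwo_add_right]
        linear_combination ihx + ihy
      | smul r x hx ih =>
        simp only [hF] at ih ⊢
        rw [Dtwo_smul_left, Dtwo_smul_right, Dtwo_smul_right]
        linear_combination r * ih
    simp only [hF] at this
    linear_combination this
  · have key : ∀ x y : Fin (m + 2) → ℂ,
        (∀ i, (Fin.cons x (Fin.cons y Z) : Fin (m+2) → (Fin (m+2) → ℂ)) i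
            ∈ Submodule.span ℂ (Set.range w)) → Dtwo Z x y = 0 := by
      intro x y hxy
      exact det_zero_of_rows_le hsp _ hxy
    have hmem : ∀ i : Fin m, Z i ∈ Submodule.span ℂ (Set.range w) := fun i =>
      Submodule.subset_span ⟨i.succ.succ.succ, by simp [hw]⟩
    have ha : a ∈ Submodule.span ℂ (Set.range w) :=
      Submodule.subset_span ⟨0, by simp [hw]⟩
    have hb : b ∈ Submodule.span ℂ (Set.range w) :=
      Submodule.subset_span ⟨(0 : Fin (m+2)).succ, by simp [hw]⟩
    have hd : d ∈ Submodule.span ℂ (Set.range w) :=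
      Submodule.subset_span ⟨(0 : Fin (m+1)).succ.succ,
        by rw [hw, Fin.cons_succ, Fin.cons_succ, Fin.cons_zero]⟩
    have h1 : Dtwo Z a b = 0 := by
      apply key; intro i
      induction i using Fin.cases with
      | zero => simpa using ha
      | succ j =>
        induction j using Fin.cases with
        | zero => simpa using hb
        | succ u => simpa using hmem u
    have h2 : Dtwo Z b d = 0 := by
      apply key; intro i
      induction i using Fin.cases with
      | zero => simpa using hb
      | succ j =>
        induction j using Fin.cases with
        | zero => simpa using hd
        | succ u => simpa using hmem u
    have h3 : Dtwo Z a d = 0 := by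
      apply key; intro i
      induction i using Fin.cases with
      | zero => simpa using ha
      | succ j =>
        induction j using Fin.cases with
        | zero => simpa using hd
        | succ u => simpa using hmem u
    rw [h1, h2, h3]; ring

end Pluecker2


section hcoLemmas

variable (q : ℂ)

lemma qPoch_ne_zero (hgen : ∀ n : ℕ, 1 ≤ n → q ^ n ≠ 1) (n : ℕ) : qPoch q n ≠ 0 := by
  refine Finset.prod_ne_zero_iff.mpr fun j _ => sub_ne_zero.mpr ?_
  exact Ne.symm (hgen (j + 1) (by omega))

lemma qPoch_succ (n : ℕ) : qPoch q (n + 1) = qPoch q n * (1 - q ^ (n + 1)) := by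
  rw [qPoch, Finset.prod_range_succ, qPoch]

lemma hco_natCast (n : ℕ) (t : Fin 2 → ℂ) :
    hco 2 q (n : ℤ) t = ∑ p ∈ Finset.HasAntidiagonal.antidiagonal n,
      t 0 ^ p.1 / qPoch q p.1 * (t 1 ^ p.2 / qPoch q p.2) := by
  rw [hco, if_pos (Int.natCast_nonneg n), Int.toNat_natCast,
    Finset.Nat.antidiagonalTuple_two, Finset.sum_map]
  refine Finset.sum_congr rfl fun p _ => ?_
  rw [Fin.prod_univ_two]
  simp

lemma hco_neg {c : ℤ} (hc : c < 0) (t : Fin 2 → ℂ) : hco 2 q c t = 0 := by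
  rw [hco, if_neg (by omega)]

lemma hco_zero (t : Fin 2 → ℂ) : hco 2 q 0 t = 1 := by
  have h := hco_natCast q 0 t
  simpa [qPoch] using h

end hcoLemmas

section hcoLemmas2

variable (q : ℂ)

lemma qshift_apply_zero (t : Fin 2 → ℂ) : qshift 2 q 0 t 0 = q * t 0 := by
  simp [qshift]

lemma qshift_apply_one (t : Fin 2 → ℂ) : qshift 2 q 0 t 1 = t 1 := by
  simp [qshift, Function.update_of_ne]

lemma hco_contig (hgen : ∀ n : ℕ, 1 ≤ n → q ^ n ≠ 1) (c : ℤ) (t : Fin 2 → ℂ) :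
    hco 2 q c (qshift 2 q 0 t) = hco 2 q c t - t 0 * hco 2 q (c - 1) t := by
  rcases lt_or_ge c 0 with hc | hc
  · rw [hco_neg q hc, hco_neg q hc, hco_neg q (by omega)]; ring
  · obtain ⟨n, rfl⟩ : ∃ n : ℕ, c = (n : ℤ) := ⟨c.toNat, (Int.toNat_of_nonneg hc).symm⟩
    cases n with
    | zero =>
      simp only [Nat.cast_zero]
      rw [hco_zero, hco_zero, show (0 : ℤ) - 1 = (-1 : ℤ) by norm_num,
        hco_neg q (by norm_num)]
      ring
    | succ n =>
      have hsub : ((n + 1 : ℕ) : ℤ) - 1 = (n : ℤ) := by push_cast; ring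
      rw [hsub, hco_natCast, hco_natCast, hco_natCast]
      have hstep : ∀ p : ℕ × ℕ,
          t 0 ^ p.1 / qPoch q p.1 * (t 1 ^ p.2 / qPoch q p.2) -
            (qshift 2 q 0 t) 0 ^ p.1 / qPoch q p.1 * ((qshift 2 q 0 t) 1 ^ p.2 / qPoch q p.2)
          = (1 - q ^ p.1) * t 0 ^ p.1 / qPoch q p.1 * (t 1 ^ p.2 / qPoch q p.2) := by
        intro p
        rw [qshift_apply_zero, qshift_apply_one, mul_pow]
        ring
      have key : (∑ p ∈ Finset.HasAntidiagonal.antidiagonal (n+1),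
            t 0 ^ p.1 / qPoch q p.1 * (t 1 ^ p.2 / qPoch q p.2)) -
          (∑ p ∈ Finset.HasAntidiagonal.antidiagonal (n+1),
            (qshift 2 q 0 t) 0 ^ p.1 / qPoch q p.1 * ((qshift 2 q 0 t) 1 ^ p.2 / qPoch q p.2)) =
          t 0 * ∑ p ∈ Finset.HasAntidiagonal.antidiagonal n,
            t 0 ^ p.1 / qPoch q p.1 * (t 1 ^ p.2 / qPoch q p.2) := by
        rw [← Finset.sum_sub_distrib]
        rw [Finset.sum_congr rfl fun p _ => hstep p]
        rw [Finset.Nat.antidiagonal_succ, Finset.sum_cons, Finset.sum_map, Finset.mul_sum]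
        simp only [pow_zero, sub_self, zero_mul, zero_div, zero_add]
        refine Finset.sum_congr rfl fun p _ => ?_
        simp only [Function.Embedding.coe_prodMap, Prod.map_fst, Prod.map_snd,
          Function.Embedding.coeFn_mk, Function.Embedding.refl_apply]
        rw [show Nat.succ p.1 = p.1 + 1 from rfl, qPoch_succ, pow_succ]
        have h2 : (1 - q ^ p.1 * q) ≠ 0 := by
          rw [← pow_succ]
          exact sub_ne_zero.mpr (Ne.symm (hgen (p.1 + 1) (by omega)))
        rw [mul_comm (qPoch q p.1) (1 - q ^ p.1 * q), mul_div_mul_left _ _ h2]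
        ring
      linear_combination -key

lemma hco_homog (c : ℤ) (t : Fin 2 → ℂ) :
    hco 2 q c (fun i => q * t i) = q ^ c * hco 2 q c t := by
  rcases lt_or_ge c 0 with hc | hc
  · rw [hco_neg q hc, hco_neg q hc]; ring
  · obtain ⟨n, rfl⟩ : ∃ n : ℕ, c = (n : ℤ) := ⟨c.toNat, (Int.toNat_of_nonneg hc).symm⟩
    rw [hco_natCast, hco_natCast, zpow_natCast, Finset.mul_sum]
    refine Finset.sum_congr rfl fun p hp => ?_
    have hp' : p.1 + p.2 = n := Finset.HasAntidiagonal.mem_antidiagonal.mp hp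
    rw [mul_pow, mul_pow, ← hp', pow_add]
    ring

lemma hco_swap (c : ℤ) (t : Fin 2 → ℂ) :
    hco 2 q c ![t 1, t 0] = hco 2 q c t := by
  rcases lt_or_ge c 0 with hc | hc
  · rw [hco_neg q hc, hco_neg q hc]
  · obtain ⟨n, rfl⟩ : ∃ n : ℕ, c = (n : ℤ) := ⟨c.toNat, (Int.toNat_of_nonneg hc).symm⟩
    rw [hco_natCast, hco_natCast]
    conv_rhs => rw [← Finset.HasAntidiagonal.map_swap_antidiagonal, Finset.sum_map]
    refine Finset.sum_congr rfl fun p _ => ?_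
    simp only [Function.Embedding.coeFn_mk, Prod.fst_swap, Prod.snd_swap,
      Matrix.cons_val_zero, Matrix.cons_val_one, Matrix.head_cons]
    ring

end hcoLemmas2

section SgenLemmas

lemma prod_zpow_eq {q : ℂ} (hq : q ≠ 0) {ι : Type*} (s : Finset ι) (f : ι → ℤ) :
    ∏ i ∈ s, q ^ f i = q ^ (∑ i ∈ s, f i) := by
  induction s using Finset.cons_induction with
  | empty => simp
  | cons a s ha ih => rw [Finset.prod_cons, Finset.sum_cons, ih, ← zpow_add₀ hq]

lemma Sgen_homog (q : ℂ) (hq0 : q ≠ 0) {N : ℕ} (μ : Fin N → ℤ) (t : Fin 2 → ℂ) :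
    Sgen 2 q μ (fun i => q * t i) = q ^ (∑ a, μ a) * Sgen 2 q μ t := by
  rw [Sgen, Sgen]
  have hM : (Matrix.of fun a b : Fin N => hco 2 q (μ a - (a : ℤ) + (b : ℤ)) (fun i => q * t i)) =
      Matrix.diagonal (fun a : Fin N => q ^ (μ a - (a : ℤ))) *
        (Matrix.of fun a b : Fin N => hco 2 q (μ a - (a : ℤ) + (b : ℤ)) t) *
        Matrix.diagonal (fun b : Fin N => q ^ (b : ℕ)) := by
    ext a b
    rw [Matrix.mul_diagonal, Matrix.diagonal_mul, Matrix.of_apply, Matrix.of_apply,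
      hco_homog, zpow_add₀ hq0, zpow_natCast]
    ring
  rw [hM, Matrix.det_mul, Matrix.det_mul, Matrix.det_diagonal, Matrix.det_diagonal]
  rw [prod_zpow_eq hq0, Finset.prod_pow_eq_pow_sum]
  rw [← zpow_natCast q (∑ b : Fin N, (b : ℕ)), mul_comm _ (q ^ ((∑ b : Fin N, (b : ℕ) : ℕ) : ℤ)),
    ← mul_assoc, ← zpow_add₀ hq0]
  congr 2
  rw [Finset.sum_sub_distrib]
  push_cast
  ring

lemma Sgen_swap (q : ℂ) {N : ℕ} (μ : Fin N → ℤ) (t : Fin 2 → ℂ) :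
    Sgen 2 q μ ![t 1, t 0] = Sgen 2 q μ t := by
  rw [Sgen, Sgen]
  congr 1
  ext a b
  rw [Matrix.of_apply, Matrix.of_apply, hco_swap]

end SgenLemmas

section Aug

variable (q : ℂ)

/-- The unipotent upper-triangular column-operation matrix. -/
def Lmat (t0 : ℂ) (N : ℕ) : Matrix (Fin N) (Fin N) ℂ :=
  Matrix.of fun c b => (if c = b then (1 : ℂ) else 0) - t0 * (if (c : ℕ) + 1 = (b : ℕ) then 1 else 0)

lemma det_Lmat (t0 : ℂ) (N : ℕ) : (Lmat t0 N).det = 1 := by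
  have h : (Lmat t0 N).BlockTriangular id := by
    intro i j hij
    simp only [Lmat, Matrix.of_apply, id] at hij ⊢
    rw [if_neg (by omega), if_neg (by omega)]
    ring
  rw [Matrix.det_of_upperTriangular h]
  simp [Lmat]

lemma mul_Lmat_zero {N : ℕ} (Bm : Matrix (Fin (N + 1)) (Fin (N + 1)) ℂ) (t0 : ℂ)
    (x : Fin (N + 1)) : (Bm * Lmat t0 (N + 1)) x 0 = Bm x 0 := by
  rw [Matrix.mul_apply]
  have : ∀ c : Fin (N + 1), Bm x c * Lmat t0 (N + 1) c 0
      = Bm x c * (if c = 0 then 1 else 0) := by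
    intro c
    have hcond : ((c : ℕ) + 1 = ((0 : Fin (N + 1)) : ℕ)) ↔ False := by
      simp
    simp only [Lmat, Matrix.of_apply]
    rw [if_congr hcond rfl rfl, if_false]
    ring
  rw [Finset.sum_congr rfl fun c _ => this c]
  simp [Finset.sum_ite_eq']

lemma mul_Lmat_succ {N : ℕ} (Bm : Matrix (Fin (N + 1)) (Fin (N + 1)) ℂ) (t0 : ℂ)
    (x : Fin (N + 1)) (j : Fin N) :
    (Bm * Lmat t0 (N + 1)) x j.succ = Bm x j.succ - t0 * Bm x j.castSucc := by
  rw [Matrix.mul_apply]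
  have : ∀ c : Fin (N + 1), Bm x c * Lmat t0 (N + 1) c j.succ
      = Bm x c * (if c = j.succ then 1 else 0) - t0 * (Bm x c * (if c = j.castSucc then 1 else 0)) := by
    intro c
    have hcond : ((c : ℕ) + 1 = (j.succ : ℕ)) ↔ (c = j.castSucc) := by
      rw [Fin.ext_iff, Fin.val_succ, Fin.coe_castSucc]
      omega
    simp only [Lmat, Matrix.of_apply]
    rw [if_congr hcond rfl rfl]
    ring
  rw [Finset.sum_congr rfl fun c _ => this c, Finset.sum_sub_distrib, ← Finset.mul_sum]
  simp [Finset.sum_ite_eq']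

lemma aug (hgen : ∀ n : ℕ, 1 ≤ n → q ^ n ≠ 1) {N : ℕ} (ν : Fin N → ℤ) (t : Fin 2 → ℂ) :
    Matrix.det (Matrix.of (Fin.cons (fun b : Fin (N + 1) => t 0 ^ (b : ℕ))
        (fun (a : Fin N) (b : Fin (N + 1)) => hco 2 q (ν a - (a : ℤ) - 1 + (b : ℤ)) t) :
        Fin (N + 1) → Fin (N + 1) → ℂ))
      = Sgen 2 q ν (qshift 2 q 0 t) := by
  set Bm : Matrix (Fin (N + 1)) (Fin (N + 1)) ℂ :=
    Matrix.of (Fin.cons (fun b : Fin (N + 1) => t 0 ^ (b : ℕ))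
      (fun (a : Fin N) (b : Fin (N + 1)) => hco 2 q (ν a - (a : ℤ) - 1 + (b : ℤ)) t) :
      Fin (N + 1) → Fin (N + 1) → ℂ) with hBm
  have hdet : Bm.det = (Bm * Lmat (t 0) (N + 1)).det := by
    rw [Matrix.det_mul, det_Lmat, mul_one]
  rw [hdet, Matrix.det_succ_row_zero]
  have h00 : (Bm * Lmat (t 0) (N + 1)) 0 0 = 1 := by
    rw [mul_Lmat_zero, hBm]
    simp
  have h0succ : ∀ i : Fin N, (Bm * Lmat (t 0) (N + 1)) 0 i.succ = 0 := by
    intro i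
    rw [mul_Lmat_succ, hBm]
    simp only [Matrix.of_apply, Fin.cons_zero, Fin.val_succ, Fin.coe_castSucc]
    rw [pow_succ]
    ring
  rw [Finset.sum_eq_single (0 : Fin (N + 1))]
  · rw [h00]
    simp only [Fin.val_zero, pow_zero, one_mul, mul_one]
    rw [Sgen]
    congr 1
    ext a b
    rw [Matrix.submatrix_apply, Fin.succAbove_zero, mul_Lmat_succ, hBm]
    simp only [Matrix.of_apply, Fin.cons_succ]
    have e1 : ν a - (a : ℤ) - 1 + ((b.succ : Fin (N + 1)) : ℤ) = ν a - (a : ℤ) + (b : ℤ) := by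
      have hv : ((b.succ : Fin (N + 1)) : ℕ) = (b : ℕ) + 1 := Fin.val_succ b
      rw [hv]
      push_cast
      ring
    have e2 : ν a - (a : ℤ) - 1 + ((b.castSucc : Fin (N + 1)) : ℤ)
        = ν a - (a : ℤ) + (b : ℤ) - 1 := by
      have hv : ((b.castSucc : Fin (N + 1)) : ℕ) = (b : ℕ) := rfl
      rw [hv]
      push_cast
      ring
    rw [e1, e2, hco_contig q hgen]
  · intro b _ hb
    induction b using Fin.cases with
    | zero => exact absurd rfl hb
    | succ i => rw [h0succ]; ring
  · intro h
    exact absurd (Finset.mem_univ _) h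

end Aug

section Backlund

variable (q : ℂ)

lemma det_cons_smul {N : ℕ} (r : ℂ) (x : Fin (N + 1) → ℂ) (Y : Fin N → Fin (N + 1) → ℂ) :
    Matrix.det (Matrix.of (Fin.cons (r • x) Y : Fin (N + 1) → Fin (N + 1) → ℂ))
      = r * Matrix.det (Matrix.of (Fin.cons x Y : Fin (N + 1) → Fin (N + 1) → ℂ)) := by
  have h := Matrix.detRowAlternating.map_update_smul
    (Fin.cons x Y : Fin (N + 1) → Fin (N + 1) → ℂ) (0 : Fin (N + 1)) r x
  simp [Fin.update_cons_zero] at h; exact h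

lemma det_cons_e {N : ℕ} (Y : Fin N → Fin (N + 1) → ℂ) :
    Matrix.det (Matrix.of (Fin.cons (fun b => if b = 0 then (1 : ℂ) else 0) Y :
        Fin (N + 1) → Fin (N + 1) → ℂ))
      = Matrix.det (Matrix.of (fun (a : Fin N) (b : Fin N) => Y a b.succ)) := by
  rw [Matrix.det_succ_row_zero, Finset.sum_eq_single (0 : Fin (N + 1))]
  · simp only [Matrix.of_apply, Fin.cons_zero, Fin.val_zero, pow_zero, one_mul,
      mul_one, Fin.succAbove_zero, eq_self_iff_true, if_true]
    congr 1
  · intro b _ hb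
    simp only [Matrix.of_apply, Fin.cons_zero, if_neg hb]
    ring
  · intro h
    exact absurd (Finset.mem_univ _) h

end Backlund

section Backlund2

variable (q : ℂ)

lemma Dtwo_eq_det {m : ℕ} (Z : Fin m → (Fin (m + 2) → ℂ)) (x y : Fin (m + 2) → ℂ) :
    Dtwo Z x y = Matrix.det (Matrix.of (Fin.cons x (Fin.cons y Z) :
      Fin (m + 2) → Fin (m + 2) → ℂ)) := rfl

lemma backlund (hq0 : q ≠ 0) (hgen : ∀ n : ℕ, 1 ≤ n → q ^ n ≠ 1) {m : ℕ} (lz : Fin m → ℤ)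
    (k l : ℤ) (t : Fin 2 → ℂ) :
    t 0 * Sgen 2 q (Fin.cons (l - 1) (Fin.cons k lz)) t * Sgen 2 q lz (qshift 2 q 0 t)
      + Sgen 2 q (Fin.cons k lz) t * Sgen 2 q (Fin.cons l lz) (qshift 2 q 0 t)
      - Sgen 2 q (Fin.cons l lz) t * Sgen 2 q (Fin.cons k lz) (qshift 2 q 0 t) = 0 := by
  classical
  by_cases ht0 : t 0 = 0
  · -- qshift fixes t, so the last two terms cancel
    have hfix : qshift 2 q 0 t = t := by
      funext i
      rw [qshift, ht0, mul_zero, ← ht0]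
      rw [Function.update_eq_self]
    rw [hfix, ht0]
    ring
  -- main case
  set Z : Fin m → (Fin (m + 2) → ℂ) :=
    fun a b => hco 2 q (lz a - (a : ℤ) - 2 + (b : ℤ)) t with hZ
  set ev : Fin (m + 2) → ℂ := fun b => if b = 0 then 1 else 0 with hev
  set u' : Fin (m + 2) → ℂ := fun b => t 0 ^ (b : ℕ) with hu'
  set vl : Fin (m + 2) → ℂ := fun b => hco 2 q (l - 1 + (b : ℤ)) t with hvl
  set vk : Fin (m + 2) → ℂ := fun b => hco 2 q (k - 1 + (b : ℤ)) t with hvk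
  have hP := pluecker Z ev (t 0 • u') vl vk
  -- I1 : D vl vk = τ_{k,l}
  have I1 : Dtwo Z vl vk = Sgen 2 q (Fin.cons (l - 1) (Fin.cons k lz)) t := by
    rw [Dtwo_eq_det, Sgen]
    congr 1
    ext a b
    induction a using Fin.cases with
    | zero =>
      simp only [Matrix.of_apply, Fin.cons_zero, hvl]
      congr 1
      all_goals simp
    | succ j =>
      induction j using Fin.cases with
      | zero =>
        simp only [Matrix.of_apply, Fin.cons_succ, Fin.cons_zero, hvk]
        congr 1
        all_goals simp
        all_goals omega
      | succ i =>
        simp only [Matrix.of_apply, Fin.cons_succ, hZ]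
        congr 1
        all_goals simp [Fin.val_succ]
        all_goals omega
  -- I2 : D ev vk = τ_k
  have I2 : Dtwo Z ev vk = Sgen 2 q (Fin.cons k lz) t := by
    rw [Dtwo_eq_det, hev, det_cons_e, Sgen]
    congr 1
    ext a b
    induction a using Fin.cases with
    | zero =>
      simp only [Matrix.of_apply, Fin.cons_zero, hvk]
      congr 1
      all_goals simp [Fin.val_succ]
      all_goals omega
    | succ i =>
      simp only [Matrix.of_apply, Fin.cons_succ, hZ]
      congr 1
      all_goals simp [Fin.val_succ]
      all_goals omega
  -- I3 : D ev vl = τ_l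
  have I3 : Dtwo Z ev vl = Sgen 2 q (Fin.cons l lz) t := by
    rw [Dtwo_eq_det, hev, det_cons_e, Sgen]
    congr 1
    ext a b
    induction a using Fin.cases with
    | zero =>
      simp only [Matrix.of_apply, Fin.cons_zero, hvl]
      congr 1
      all_goals simp [Fin.val_succ]
      all_goals omega
    | succ i =>
      simp only [Matrix.of_apply, Fin.cons_succ, hZ]
      congr 1
      all_goals simp [Fin.val_succ]
      all_goals omega
  -- I4 : D u' vk = σ_k
  have I4 : Dtwo Z u' vk = Sgen 2 q (Fin.cons k lz) (qshift 2 q 0 t) := by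
    rw [Dtwo_eq_det, ← aug q hgen (Fin.cons k lz) t]
    congr 1
    ext a b
    induction a using Fin.cases with
    | zero => simp only [Matrix.of_apply, Fin.cons_zero, hu']
    | succ j =>
      induction j using Fin.cases with
      | zero =>
        simp only [Matrix.of_apply, Fin.cons_succ, Fin.cons_zero, hvk]
        congr 1
        all_goals simp
        all_goals omega
      | succ i =>
        simp only [Matrix.of_apply, Fin.cons_succ, hZ]
        congr 1
        all_goals simp [Fin.val_succ]
        all_goals omega
  -- I5 : D u' vl = σ_l
  have I5 : Dtwo Z u' vl = Sgen 2 q (Fin.cons l lz) (qshift 2 q 0 t) := by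
    rw [Dtwo_eq_det, ← aug q hgen (Fin.cons l lz) t]
    congr 1
    ext a b
    induction a using Fin.cases with
    | zero => simp only [Matrix.of_apply, Fin.cons_zero, hu']
    | succ j =>
      induction j using Fin.cases with
      | zero =>
        simp only [Matrix.of_apply, Fin.cons_succ, Fin.cons_zero, hvl]
        congr 1
        all_goals simp
        all_goals omega
      | succ i =>
        simp only [Matrix.of_apply, Fin.cons_succ, hZ]
        congr 1
        all_goals simp [Fin.val_succ]
        all_goals omega
  -- I6 : D ev (t0 • u') = t0^2 * σ_λ
  have I6 : Dtwo Z ev (t 0 • u') = t 0 * (t 0 * Sgen 2 q lz (qshift 2 q 0 t)) := by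
    rw [Dtwo_smul_right, Dtwo_eq_det, hev, det_cons_e, ← aug q hgen lz t]
    have hrow : (Matrix.of fun (a : Fin (m + 1)) (b : Fin (m + 1)) =>
        (Fin.cons u' Z : Fin (m + 1) → Fin (m + 2) → ℂ) a b.succ)
        = Matrix.of (Fin.cons ((t 0) • fun b0 : Fin (m + 1) => t 0 ^ (b0 : ℕ))
            (fun (a0 : Fin m) (b0 : Fin (m + 1)) =>
              hco 2 q (lz a0 - (a0 : ℤ) - 1 + (b0 : ℤ)) t) :
            Fin (m + 1) → Fin (m + 1) → ℂ) := by
      ext a b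
      induction a using Fin.cases with
      | zero =>
        simp only [Matrix.of_apply, Fin.cons_zero, hu', Pi.smul_apply, smul_eq_mul,
          Fin.val_succ]
        rw [pow_succ]
        ring
      | succ i =>
        simp only [Matrix.of_apply, Fin.cons_succ, hZ]
        congr 1
        all_goals simp [Fin.val_succ]
        all_goals omega
    rw [show (Matrix.of fun (a : Fin (m + 1)) (b : Fin (m + 1)) =>
        (Fin.cons u' Z : Fin (m + 1) → Fin (m + 2) → ℂ) a b.succ) = _ from hrow,
      det_cons_smul]
  -- assemble
  rw [Dtwo_smul_left, Dtwo_smul_left, I1, I2, I3, I4, I5, I6] at hP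
  have key : t 0 * t 0 *
      (t 0 * Sgen 2 q (Fin.cons (l - 1) (Fin.cons k lz)) t * Sgen 2 q lz (qshift 2 q 0 t)
        + Sgen 2 q (Fin.cons k lz) t * Sgen 2 q (Fin.cons l lz) (qshift 2 q 0 t)
        - Sgen 2 q (Fin.cons l lz) t * Sgen 2 q (Fin.cons k lz) (qshift 2 q 0 t)) = 0 := by
    linear_combination t 0 * hP
  rcases mul_eq_zero.mp key with h | h
  · exact absurd h (mul_ne_zero ht0 ht0)
  · exact h
end Backlund2

section Final

variable (q : ℂ)

lemma qshift_one_swap (t : Fin 2 → ℂ) :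
    qshift 2 q 1 t = ![(qshift 2 q 0 ![t 1, t 0]) 1, (qshift 2 q 0 ![t 1, t 0]) 0] := by
  funext i
  fin_cases i <;> simp [qshift, Function.update] <;> rfl

lemma qshift_comp (t : Fin 2 → ℂ) :
    qshift 2 q 1 (qshift 2 q 0 t) = fun i => q * t i := by
  funext i
  fin_cases i <;> simp [qshift, Function.update]

lemma backlund2 (hq0 : q ≠ 0) (hgen : ∀ n : ℕ, 1 ≤ n → q ^ n ≠ 1) {m : ℕ} (lz : Fin m → ℤ)
    (k l : ℤ) (t : Fin 2 → ℂ) :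
    t 1 * Sgen 2 q (Fin.cons (l - 1) (Fin.cons k lz)) t * Sgen 2 q lz (qshift 2 q 1 t)
      + Sgen 2 q (Fin.cons k lz) t * Sgen 2 q (Fin.cons l lz) (qshift 2 q 1 t)
      - Sgen 2 q (Fin.cons l lz) t * Sgen 2 q (Fin.cons k lz) (qshift 2 q 1 t) = 0 := by
  have hB := backlund q hq0 hgen lz k l ![t 1, t 0]
  have h0 : (![t 1, t 0] : Fin 2 → ℂ) 0 = t 1 := rfl
  have hsh : ∀ (N : ℕ) (μ : Fin N → ℤ),
      Sgen 2 q μ (qshift 2 q 0 ![t 1, t 0]) = Sgen 2 q μ (qshift 2 q 1 t) := by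
    intro N μ
    rw [qshift_one_swap q t, Sgen_swap]
  rw [h0, Sgen_swap, Sgen_swap, Sgen_swap, hsh, hsh, hsh] at hB
  exact hB


/-- Toda-type bilinear equation for q-Schur functions (M = 2):
q^k t_1 T_1(τ) τ_{k,l} + t_2 T_1(τ_{k,l}) τ = (q^k - q^l) T_1(τ_k) τ_l. -/
theorem stmt14 (q : ℂ) (hq0 : q ≠ 0) (hgen : ∀ n : ℕ, 1 ≤ n → q ^ n ≠ 1)
    {m : ℕ} (lam : Fin m → ℕ) (hlam : Antitone lam) (k l : ℤ) (hkl : k < l)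
    (t : Fin 2 → ℂ) :
    q ^ k * t 0 * Sgen 2 q (fun a => (lam a : ℤ)) (qshift 2 q 0 t)
        * Sgen 2 q (Fin.cons (l - 1) (Fin.cons k fun a => (lam a : ℤ))) t
      + t 1 * Sgen 2 q (Fin.cons (l - 1) (Fin.cons k fun a => (lam a : ℤ)))
          (qshift 2 q 0 t)
        * Sgen 2 q (fun a => (lam a : ℤ)) t
      = (q ^ k - q ^ l)
          * Sgen 2 q (Fin.cons k fun a => (lam a : ℤ)) (qshift 2 q 0 t)
          * Sgen 2 q (Fin.cons l fun a => (lam a : ℤ)) t := by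
  set lz : Fin m → ℤ := fun a => (lam a : ℤ) with hlz
  set W : ℤ := ∑ a, lz a with hW
  have hC := backlund q hq0 hgen lz k l t
  have hD := backlund2 q hq0 hgen lz k l (qshift 2 q 0 t)
  rw [qshift_apply_one, qshift_comp] at hD
  rw [Sgen_homog q hq0 lz t, Sgen_homog q hq0 (Fin.cons l lz) t,
    Sgen_homog q hq0 (Fin.cons k lz) t] at hD
  rw [Fin.sum_cons, Fin.sum_cons, ← hW] at hD
  have hqW : q ^ W ≠ 0 := zpow_ne_zero _ hq0
  have key : q ^ W * (t 1 * Sgen 2 q (Fin.cons (l - 1) (Fin.cons k lz)) (qshift 2 q 0 t)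
        * Sgen 2 q lz t
      + q ^ l * (Sgen 2 q (Fin.cons k lz) (qshift 2 q 0 t) * Sgen 2 q (Fin.cons l lz) t)
      - q ^ k * (Sgen 2 q (Fin.cons l lz) (qshift 2 q 0 t) * Sgen 2 q (Fin.cons k lz) t))
      = 0 := by
    rw [zpow_add₀ hq0 l W, zpow_add₀ hq0 k W] at hD
    linear_combination hD
  have hD' := (mul_eq_zero.mp key).resolve_left hqW
  linear_combination q ^ k * hC + hD'
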